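/- Let G be a group with a choice of generators w ↦ w̄ from W whose gross cogrowth satisfies θ < 1 (i.e., G is non-amenable). Then for every ε > 0, the set of words w such that every contiguous subword v of w with |v| ≥ ε·|w| satisfies |v̄| ≥ ((1−θ)/θ − ε)·|v| is exponentially generic. -/

import Mathlib

open Filter

namespace GenericSubgroups

/-- A word over the alphabet `Fin m × Bool` (generator index, with `true` = formal inverse). -/
abbrev Word (m : ℕ) := List (Fin m × Bool)

/-- The disk of radius `n` : words of length at most `n`. -/
def ball (m n : ℕ) : Set (Word m) := {w | w.length ≤ n}

/-- The sphere of radius `n` : words of length exactly `n`. -/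
def sphere (m n : ℕ) : Set (Word m) := {w | w.length = n}

/-- A set of words is exponentially negligible. -/
def ExpNegligible {m : ℕ} (X : Set (Word m)) : Prop :=
  ∃ α : ℝ, 0 < α ∧ α < 1 ∧
    ∀ᶠ n in atTop, ((X ∩ ball m n).ncard : ℝ) / ((ball m n).ncard : ℝ) ≤ α ^ n

/-- A set of words is exponentially generic if its complement is exponentially negligible. -/
def ExpGeneric {m : ℕ} (X : Set (Word m)) : Prop := ExpNegligible Xᶜ

/-- Disk of radius `n` in the set of `k`-tuples of words. -/
def ballK (m k n : ℕ) : Set (Fin k → Word m) := {w | ∀ i, (w i).length ≤ n}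

def ExpNegligibleK {m k : ℕ} (X : Set (Fin k → Word m)) : Prop :=
  ∃ α : ℝ, 0 < α ∧ α < 1 ∧
    ∀ᶠ n in atTop, ((X ∩ ballK m k n).ncard : ℝ) / ((ballK m k n).ncard : ℝ) ≤ α ^ n

def ExpGenericK {m k : ℕ} (X : Set (Fin k → Word m)) : Prop := ExpNegligibleK Xᶜ

variable {G : Type*} [Group G]

/-- Evaluation of a word in `G`, determined by the family `g` of generators. -/
def eval {m : ℕ} (g : Fin m → G) (w : Word m) : G :=
  (w.map (fun p => if p.2 then (g p.1)⁻¹ else g p.1)).prod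

/-- Word length of an element of `G`. -/
noncomputable def wlen {m : ℕ} (g : Fin m → G) (x : G) : ℕ :=
  sInf {n | ∃ w : Word m, w.length = n ∧ eval g w = x}

/-- Word metric on `G`. -/
noncomputable def wdist {m : ℕ} (g : Fin m → G) (x y : G) : ℕ := wlen g (x⁻¹ * y)

/-- Words of length exactly `n` representing the identity. -/
def V {m : ℕ} (g : Fin m → G) (n : ℕ) : Set (Word m) :=
  {w | w.length = n ∧ eval g w = 1}

/-- The gross cogrowth `θ = limsup (1/n) log_{2m} |V_n|`. -/
noncomputable def cogrowth {m : ℕ} (g : Fin m → G) : ℝ :=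
  limsup (fun n : ℕ => Real.logb (2 * m : ℝ) ((V g n).ncard : ℝ) / (n : ℝ)) atTop

/-- The four-point (quadrilateral) condition with constant `δ` for the word metric. -/
def FourPoint {m : ℕ} (g : Fin m → G) (δ : ℝ) : Prop :=
  ∀ p q r s : G,
    (wdist g p s : ℝ) + (wdist g q r : ℝ) ≤
      2 * δ + max ((wdist g p q : ℝ) + (wdist g r s : ℝ)) ((wdist g p r : ℝ) + (wdist g q s : ℝ))

/-- The Gromov product `(x|y)_1` with respect to the word metric. -/
noncomputable def gp {m : ℕ} (g : Fin m → G) (x y : G) : ℝ :=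
  ((wlen g x : ℝ) + (wlen g y : ℝ) - (wlen g (x⁻¹ * y) : ℝ)) / 2

/-- `x^e` where `e : Bool`, `true` meaning inverse. -/
def powB (x : G) (e : Bool) : G := if e then x⁻¹ else x

/-- Formal inverse of a word. -/
def winv {m : ℕ} (w : Word m) : Word m := (w.reverse).map (fun p => (p.1, !p.2))

/-! A word `v` of length `k` whose value has length `< c k` is completed, by a geodesic word
for `v̄⁻¹`, to a relation of length at most `(1 + c) k`, and distinct `v` give distinct
relations. Relations of length `n` number at most `(2m)^{θ' n}` for every `θ' > θ`, so at most
`(2m)^{θ'(1+c)k}` words of length `k` are that short, an exponentially small proportion as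
soon as `θ'(1+c) < 1`; for `c = (1-θ)/θ - ε` one has `θ(1+c) = 1 - εθ < 1`. A word of length
`n` with such a factor of length `k ≥ εn` arises by inserting a short word into one of the
`(2m)^{n-k}` words of length `n-k`, at one of `n+1` places, so these words form an
exponentially small proportion of every sphere, hence of every ball. -/

variable {m : ℕ}

lemma one_lt_two_mul_natCast (hm : 0 < m) : (1 : ℝ) < 2 * m := by
  have : (1 : ℝ) ≤ m := by exact_mod_cast hm
  linarith

lemma eval_append (g : Fin m → G) (u v : Word m) : eval g (u ++ v) = eval g u * eval g v := by
  simp [eval]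

lemma length_winv (w : Word m) : (winv w).length = w.length := by
  simp [winv]

lemma eval_winv (g : Fin m → G) (w : Word m) : eval g (winv w) = (eval g w)⁻¹ := by
  induction w with
  | nil => simp [eval, winv]
  | cons a w ih =>
    obtain ⟨x, e⟩ := a
    rw [show winv ((x, e) :: w) = winv w ++ [(x, !e)] by simp [winv], eval_append, ih,
      show (x, e) :: w = [(x, e)] ++ w from rfl, eval_append, mul_inv_rev]
    cases e <;> simp [eval]

lemma exists_length_eq_wlen (g : Fin m → G) (v : Word m) :
    ∃ u : Word m, u.length = wlen g (eval g v) ∧ eval g u = eval g v :=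
  Nat.sInf_mem (⟨v.length, v, rfl, rfl⟩ :
    {n | ∃ w : Word m, w.length = n ∧ eval g w = eval g v}.Nonempty)

lemma finite_sphere (m n : ℕ) : (sphere m n).Finite :=
  List.finite_length_eq _ n

lemma ncard_sphere (m n : ℕ) : (sphere m n).ncard = (2 * m) ^ n := by
  have e : sphere m n ≃ List.Vector (Fin m × Bool) n := Equiv.refl _
  rw [← Nat.card_coe_set_eq, Nat.card_congr e, Nat.card_eq_fintype_card, card_vector]
  simp [mul_comm]

lemma sphere_subset_ball (m n : ℕ) : sphere m n ⊆ ball m n :=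
  fun _ hw => le_of_eq hw

lemma ncard_inter_ball_le_sum (X : Set (Word m)) (n : ℕ) :
    (X ∩ ball m n).ncard ≤ ∑ j ∈ Finset.range (n + 1), (X ∩ sphere m j).ncard := by
  refine (Set.ncard_le_ncard ?_ ?_).trans (Finset.set_ncard_biUnion_le _ _)
  · rintro w ⟨hwX, hw⟩
    simp only [Set.mem_iUnion, Finset.mem_range]
    exact ⟨w.length, Nat.lt_succ_of_le hw, hwX, rfl⟩
  · exact Set.Finite.biUnion (Finset.finite_toSet _)
      fun j _ => (finite_sphere m j).subset Set.inter_subset_right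

lemma eventually_mul_add_one_pow_mul_pow_le (K : ℝ) (d : ℕ) {r s : ℝ} (hr : 0 ≤ r)
    (hrs : r < s) : ∀ᶠ n : ℕ in atTop, K * ((n : ℝ) + 1) ^ d * r ^ n ≤ s ^ n := by
  have hs : 0 < s := hr.trans_lt hrs
  have hlo := ((isLittleO_pow_const_mul_const_pow_const_pow_of_norm_lt d
    (by rwa [Real.norm_of_nonneg hr])).const_mul_left (|K| * 2 ^ d)).bound one_pos
  filter_upwards [hlo, eventually_ge_atTop 1] with n hn hn1
  rw [one_mul, Real.norm_of_nonneg (by positivity), Real.norm_of_nonneg (by positivity)] at hn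
  have h2n : (n : ℝ) + 1 ≤ 2 * n := by
    have : (1 : ℝ) ≤ n := by exact_mod_cast hn1
    linarith
  calc K * ((n : ℝ) + 1) ^ d * r ^ n ≤ |K| * (2 * n) ^ d * r ^ n := by
        gcongr
        exact le_abs_self K
    _ = |K| * 2 ^ d * ((n : ℝ) ^ d * r ^ n) := by ring
    _ ≤ s ^ n := hn

lemma expNegligible_of_ncard_inter_sphere_le (hm : 0 < m) {X : Set (Word m)} {r : ℝ}
    (hr0 : 0 ≤ r) (hr1 : r < 1)
    (hX : ∀ᶠ j in atTop, ((X ∩ sphere m j).ncard : ℝ) ≤ r ^ j * (2 * m : ℝ) ^ j) :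
    ExpNegligible X := by
  obtain ⟨J, hJ⟩ := eventually_atTop.1 hX
  set b : ℝ := 2 * m
  have hb : 1 < b := one_lt_two_mul_natCast hm
  -- `s ≥ b⁻¹` makes `(s b)^j` nondecreasing, so the constant `b^J` absorbs the spheres below `J`.
  set s := max r b⁻¹
  have hs0 : 0 < s := lt_max_of_lt_right (by positivity)
  have hs1 : s < 1 := max_lt hr1 (inv_lt_one_of_one_lt₀ hb)
  have hsb : 1 ≤ s * b := by
    calc (1 : ℝ) = b⁻¹ * b := (inv_mul_cancel₀ (by positivity)).symm
      _ ≤ s * b := mul_le_mul_of_nonneg_right (le_max_right _ _) (by positivity)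
  have hsphere : ∀ j, ((X ∩ sphere m j).ncard : ℝ) ≤ b ^ J * (s * b) ^ j := by
    intro j
    rcases lt_or_ge j J with hj | hj
    · calc ((X ∩ sphere m j).ncard : ℝ) ≤ (sphere m j).ncard := by
            exact_mod_cast Set.ncard_le_ncard Set.inter_subset_right (finite_sphere m j)
        _ = b ^ j := by rw [ncard_sphere]; push_cast; rfl
        _ ≤ b ^ J := pow_le_pow_right₀ hb.le hj.le
        _ ≤ b ^ J * (s * b) ^ j := le_mul_of_one_le_right (by positivity) (one_le_pow₀ hsb)
    · calc ((X ∩ sphere m j).ncard : ℝ) ≤ r ^ j * b ^ j := hJ j hj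
        _ ≤ s ^ j * b ^ j :=
          mul_le_mul_of_nonneg_right (pow_le_pow_left₀ hr0 (le_max_left _ _) j) (by positivity)
        _ = (s * b) ^ j := (mul_pow s b j).symm
        _ ≤ b ^ J * (s * b) ^ j := le_mul_of_one_le_left (by positivity) (one_le_pow₀ hb.le)
  obtain ⟨α, hsα, hα1⟩ := exists_between hs1
  refine ⟨α, hs0.trans hsα, hα1, ?_⟩
  filter_upwards [eventually_mul_add_one_pow_mul_pow_le (b ^ J) 1 hs0.le hsα] with n hn
  have hball : ((X ∩ ball m n).ncard : ℝ) ≤ (n + 1) * (b ^ J * (s * b) ^ n) := by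
    calc ((X ∩ ball m n).ncard : ℝ)
        ≤ ∑ j ∈ Finset.range (n + 1), ((X ∩ sphere m j).ncard : ℝ) := by
          exact_mod_cast ncard_inter_ball_le_sum X n
      _ ≤ ∑ j ∈ Finset.range (n + 1), b ^ J * (s * b) ^ n := by
          refine Finset.sum_le_sum fun j hj => (hsphere j).trans ?_
          gcongr
          exact Nat.lt_succ_iff.1 (Finset.mem_range.1 hj)
      _ = (n + 1) * (b ^ J * (s * b) ^ n) := by simp
  have hden : b ^ n ≤ (ball m n).ncard := by
    calc b ^ n = (sphere m n).ncard := by rw [ncard_sphere]; push_cast; rfl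
      _ ≤ (ball m n).ncard := by
        exact_mod_cast Set.ncard_le_ncard (sphere_subset_ball m n) (List.finite_length_le _ n)
  calc ((X ∩ ball m n).ncard : ℝ) / (ball m n).ncard ≤ ((X ∩ ball m n).ncard : ℝ) / b ^ n := by
        gcongr
    _ ≤ (n + 1) * (b ^ J * (s * b) ^ n) / b ^ n := by gcongr
    _ = b ^ J * ((n : ℝ) + 1) ^ 1 * s ^ n := by field_simp; ring
    _ ≤ α ^ n := hn

lemma expGeneric_univ : ExpGeneric (Set.univ : Set (Word m)) :=
  ⟨1 / 2, by norm_num, by norm_num, Eventually.of_forall fun n => by simp⟩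

lemma ncard_V_le (g : Fin m → G) (n : ℕ) : (V g n).ncard ≤ (2 * m) ^ n :=
  ncard_sphere m n ▸ Set.ncard_le_ncard (fun _ hw => hw.1) (finite_sphere m n)

lemma eventually_ncard_V_le_of_cogrowth_lt (hm : 0 < m) (g : Fin m → G) {θ : ℝ}
    (hθ : cogrowth g < θ) : ∀ᶠ n : ℕ in atTop, ((V g n).ncard : ℝ) ≤ (2 * m : ℝ) ^ (θ * n) := by
  have hb := one_lt_two_mul_natCast hm
  have hbdd : IsBoundedUnder (· ≤ ·) atTop
      fun n : ℕ => Real.logb (2 * m : ℝ) ((V g n).ncard : ℝ) / (n : ℝ) := by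
    refine isBoundedUnder_of ⟨1, fun n => div_le_one_of_le₀ ?_ n.cast_nonneg⟩
    rcases Nat.eq_zero_or_pos (V g n).ncard with h | h
    · simp [h]
    · rw [Real.logb_le_iff_le_rpow hb (by exact_mod_cast h), Real.rpow_natCast]
      exact_mod_cast ncard_V_le g n
  filter_upwards [eventually_lt_of_limsup_lt hθ hbdd, eventually_gt_atTop 0] with n hn hn0
  rcases Nat.eq_zero_or_pos (V g n).ncard with h | h
  · rw [h, Nat.cast_zero]
    positivity
  · rw [div_lt_iff₀ (by exact_mod_cast hn0),
      Real.logb_lt_iff_lt_rpow hb (by exact_mod_cast h)] at hn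
    exact hn.le

def distorted (g : Fin m → G) (c : ℝ) (k : ℕ) : Set (Word m) :=
  {v | v.length = k ∧ (wlen g (eval g v) : ℝ) < c * k}

lemma finite_distorted (g : Fin m → G) (c : ℝ) (k : ℕ) : (distorted g c k).Finite :=
  (finite_sphere m k).subset fun _ hv => hv.1

lemma ncard_distorted_le_sum (g : Fin m → G) (c : ℝ) (k : ℕ) :
    (distorted g c k).ncard ≤ ∑ ℓ ∈ Finset.range (⌊c * k⌋₊ + 1), (V g (k + ℓ)).ncard := by
  choose u hu_len hu_eval using exists_length_eq_wlen g
  refine (Set.ncard_le_ncard_of_injOn (fun v => v ++ winv (u v)) ?_ ?_ ?_).trans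
    (Finset.set_ncard_biUnion_le _ _)
  · rintro v ⟨hv_len, hv_short⟩
    simp only [Set.mem_iUnion, Finset.mem_range]
    refine ⟨wlen g (eval g v), Nat.lt_succ_of_le (Nat.le_floor hv_short.le), ?_, ?_⟩
    · simp [length_winv, hu_len, hv_len]
    · rw [eval_append, eval_winv, hu_eval, mul_inv_cancel]
  · intro v₁ h₁ v₂ h₂ h
    exact (List.append_inj h (h₁.1.trans h₂.1.symm)).1
  · exact Set.Finite.biUnion (Finset.finite_toSet _)
      fun ℓ _ => (finite_sphere m _).subset fun _ hw => hw.1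

lemma ncard_distorted_le (hm : 0 < m) (g : Fin m → G) {θ c : ℝ} (hθ : 0 ≤ θ) (hc : 0 ≤ c)
    {N k : ℕ} (hV : ∀ n ≥ N, ((V g n).ncard : ℝ) ≤ (2 * m : ℝ) ^ (θ * n)) (hk : N ≤ k) :
    ((distorted g c k).ncard : ℝ) ≤ (c * k + 1) * (2 * m : ℝ) ^ (θ * (1 + c) * k) := by
  have hb := (one_lt_two_mul_natCast hm).le
  have hck : (0 : ℝ) ≤ c * k := by positivity
  calc ((distorted g c k).ncard : ℝ)
      ≤ ∑ ℓ ∈ Finset.range (⌊c * k⌋₊ + 1), ((V g (k + ℓ)).ncard : ℝ) := by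
        exact_mod_cast ncard_distorted_le_sum g c k
    _ ≤ ∑ ℓ ∈ Finset.range (⌊c * k⌋₊ + 1), (2 * m : ℝ) ^ (θ * (1 + c) * k) := by
        refine Finset.sum_le_sum fun ℓ hℓ => (hV _ (hk.trans (Nat.le_add_right _ _))).trans
          (Real.rpow_le_rpow_of_exponent_le hb ?_)
        have hℓ : (ℓ : ℝ) ≤ c * k :=
          (Nat.cast_le.2 (Nat.lt_succ_iff.1 (Finset.mem_range.1 hℓ))).trans (Nat.floor_le hck)
        push_cast
        nlinarith
    _ ≤ (c * k + 1) * (2 * m : ℝ) ^ (θ * (1 + c) * k) := by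
        rw [Finset.sum_const, Finset.card_range, nsmul_eq_mul]
        gcongr
        push_cast
        linarith [Nat.floor_le hck]

def longFactorsUndistorted (g : Fin m → G) (ε c : ℝ) : Set (Word m) :=
  {w | ∀ u v u' : Word m, w = u ++ v ++ u' → ε * (w.length : ℝ) ≤ (v.length : ℝ) →
    c * (v.length : ℝ) ≤ (wlen g (eval g v) : ℝ)}

lemma longFactorsUndistorted_eq_univ (g : Fin m → G) (ε : ℝ) {c : ℝ} (hc : c ≤ 0) :
    longFactorsUndistorted g ε c = Set.univ :=
  Set.eq_univ_of_forall fun _ _ v _ _ _ =>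
    (mul_nonpos_of_nonpos_of_nonneg hc v.length.cast_nonneg).trans (Nat.cast_nonneg _)

lemma compl_longFactorsUndistorted_inter_sphere_subset (g : Fin m → G) (ε c : ℝ) (j : ℕ) :
    (longFactorsUndistorted g ε c)ᶜ ∩ sphere m j ⊆
      ⋃ i ∈ Finset.range (j + 1), ⋃ k ∈ (Finset.range (j + 1)).filter (fun k : ℕ => ε * j ≤ k),
        (fun p : Word m × Word m => p.1.take i ++ p.2 ++ p.1.drop i) ''
          (sphere m (j - k) ×ˢ distorted g c k) := by
  rintro w ⟨hw, rfl⟩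
  simp only [longFactorsUndistorted, Set.mem_compl_iff, Set.mem_ofPred_eq, not_forall, not_le,
    exists_prop] at hw
  obtain ⟨u, v, u', rfl, hlong, hshort⟩ := hw
  simp only [Set.mem_iUnion, Finset.mem_range, Finset.mem_filter, Set.mem_image, Set.mem_prod]
  refine ⟨u.length, by simp only [List.length_append]; omega, v.length,
    ⟨by simp only [List.length_append]; omega, hlong⟩, (u ++ u', v), ⟨?_, rfl, hshort⟩, by simp⟩
  simp only [sphere, Set.mem_ofPred_eq, List.length_append]
  omega

lemma ncard_compl_longFactorsUndistorted_inter_sphere_le (g : Fin m → G) (ε c : ℝ) (j : ℕ) :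
    ((longFactorsUndistorted g ε c)ᶜ ∩ sphere m j).ncard ≤
      (j + 1) * ∑ k ∈ (Finset.range (j + 1)).filter (fun k : ℕ => ε * j ≤ k),
        (2 * m) ^ (j - k) * (distorted g c k).ncard := by
  refine (Set.ncard_le_ncard (compl_longFactorsUndistorted_inter_sphere_subset g ε c j)
    (Set.Finite.biUnion (Finset.finite_toSet _) fun _ _ =>
      Set.Finite.biUnion (Finset.finite_toSet _) fun k _ =>
        ((finite_sphere m _).prod (finite_distorted g c k)).image _)).trans ?_
  refine ((Finset.set_ncard_biUnion_le _ _).trans (Finset.sum_le_sum fun _ _ => ?_)).trans_eq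
    (by rw [Finset.sum_const, Finset.card_range, smul_eq_mul])
  refine (Finset.set_ncard_biUnion_le _ _).trans (Finset.sum_le_sum fun k _ => ?_)
  rw [← ncard_sphere, ← Set.ncard_prod]
  exact Set.ncard_image_le ((finite_sphere m _).prod (finite_distorted g c k))

lemma eventually_ncard_compl_longFactorsUndistorted_inter_sphere_le (hm : 0 < m)
    (g : Fin m → G) {ε c θ : ℝ} (hε : 0 < ε) (hc : 0 ≤ c) (hθ : 0 ≤ θ) (hθc : θ * (1 + c) ≤ 1)
    (hV : ∀ᶠ n : ℕ in atTop, ((V g n).ncard : ℝ) ≤ (2 * m : ℝ) ^ (θ * n)) :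
    ∀ᶠ j : ℕ in atTop, (((longFactorsUndistorted g ε c)ᶜ ∩ sphere m j).ncard : ℝ) ≤
      (c + 1) * ((j : ℝ) + 1) ^ 3 * (2 * m : ℝ) ^ ((1 - (1 - θ * (1 + c)) * ε) * j) := by
  obtain ⟨N, hN⟩ := eventually_atTop.1 hV
  set δ := 1 - θ * (1 + c)
  have hδ : 0 ≤ δ := by linarith
  have hb := (one_lt_two_mul_natCast hm).le
  have hlong : ∀ᶠ j : ℕ in atTop, (N : ℝ) ≤ ε * j :=
    (tendsto_natCast_atTop_atTop.const_mul_atTop hε).eventually_ge_atTop _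
  filter_upwards [hlong] with j hj
  set B := (c * j + 1) * (2 * m : ℝ) ^ ((1 - δ * ε) * j)
  have hterm : ∀ k ∈ (Finset.range (j + 1)).filter (fun k : ℕ => ε * j ≤ k),
      (2 * m : ℝ) ^ (j - k) * (distorted g c k).ncard ≤ B := by
    intro k hk
    obtain ⟨hk_range, hεk⟩ := Finset.mem_filter.1 hk
    have hkj : k ≤ j := Nat.lt_succ_iff.1 (Finset.mem_range.1 hk_range)
    have hNk : N ≤ k := by exact_mod_cast hj.trans hεk
    have hexp : ((j - k : ℕ) : ℝ) + θ * (1 + c) * k ≤ (1 - δ * ε) * j := by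
      have : δ * (ε * j) ≤ δ * k := mul_le_mul_of_nonneg_left hεk hδ
      push_cast [Nat.cast_sub hkj]
      linarith
    calc (2 * m : ℝ) ^ (j - k) * (distorted g c k).ncard
        ≤ (2 * m : ℝ) ^ ((j - k : ℕ) : ℝ) * ((c * k + 1) * (2 * m : ℝ) ^ (θ * (1 + c) * k)) := by
          rw [Real.rpow_natCast]
          gcongr
          exact ncard_distorted_le hm g hθ hc hN hNk
      _ = (c * k + 1) * (2 * m : ℝ) ^ (((j - k : ℕ) : ℝ) + θ * (1 + c) * k) := by
          rw [Real.rpow_add (by positivity)]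
          ring
      _ ≤ (c * j + 1) * (2 * m : ℝ) ^ ((1 - δ * ε) * j) := by
          gcongr
  have hcard : (((Finset.range (j + 1)).filter (fun k : ℕ => ε * j ≤ k)).card : ℝ) ≤ j + 1 := by
    exact_mod_cast (Finset.card_filter_le _ _).trans (Finset.card_range _).le
  calc (((longFactorsUndistorted g ε c)ᶜ ∩ sphere m j).ncard : ℝ)
      ≤ (j + 1) * ∑ k ∈ (Finset.range (j + 1)).filter (fun k : ℕ => ε * j ≤ k),
          (2 * m : ℝ) ^ (j - k) * (distorted g c k).ncard := by
        exact_mod_cast ncard_compl_longFactorsUndistorted_inter_sphere_le g ε c j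
    _ ≤ (j + 1) * ((j + 1) * B) := by
        gcongr
        exact (Finset.sum_le_card_nsmul _ _ _ hterm).trans (by rw [nsmul_eq_mul]; gcongr)
    _ ≤ (c + 1) * ((j : ℝ) + 1) ^ 3 * (2 * m : ℝ) ^ ((1 - δ * ε) * j) := by
        have : c * j + 1 ≤ (c + 1) * (j + 1) := by nlinarith
        calc (j + 1) * ((j + 1) * B)
            = ((j : ℝ) + 1) ^ 2 * (c * j + 1) * (2 * m : ℝ) ^ ((1 - δ * ε) * j) := by ring
          _ ≤ ((j : ℝ) + 1) ^ 2 * ((c + 1) * (j + 1)) * (2 * m : ℝ) ^ ((1 - δ * ε) * j) := by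
            gcongr
          _ = _ := by ring

lemma expNegligible_compl_longFactorsUndistorted (hm : 0 < m) (g : Fin m → G) {ε c θ : ℝ}
    (hε : 0 < ε) (hc : 0 ≤ c) (hθ : 0 ≤ θ) (hθc : θ * (1 + c) < 1)
    (hV : ∀ᶠ n : ℕ in atTop, ((V g n).ncard : ℝ) ≤ (2 * m : ℝ) ^ (θ * n)) :
    ExpNegligible (longFactorsUndistorted g ε c)ᶜ := by
  set η := (1 - θ * (1 + c)) * ε
  have hb := one_lt_two_mul_natCast hm
  set r := (2 * m : ℝ) ^ (-η)
  have hr0 : 0 < r := Real.rpow_pos_of_pos (by positivity) _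
  have hr1 : r < 1 := Real.rpow_lt_one_of_one_lt_of_neg hb (neg_neg_of_pos (by positivity))
  obtain ⟨s, hrs, hs1⟩ := exists_between hr1
  refine expNegligible_of_ncard_inter_sphere_le hm (hr0.trans hrs).le hs1 ?_
  filter_upwards [eventually_ncard_compl_longFactorsUndistorted_inter_sphere_le hm g hε hc hθ
    hθc.le hV, eventually_mul_add_one_pow_mul_pow_le (c + 1) 3 hr0.le hrs] with j hj hpoly
  calc (((longFactorsUndistorted g ε c)ᶜ ∩ sphere m j).ncard : ℝ)
      ≤ (c + 1) * ((j : ℝ) + 1) ^ 3 * (2 * m : ℝ) ^ ((1 - η) * j) := hj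
    _ = (c + 1) * ((j : ℝ) + 1) ^ 3 * r ^ j * (2 * m : ℝ) ^ j := by
        rw [show (1 - η) * (j : ℝ) = -η * j + j by ring, Real.rpow_add (by positivity),
          Real.rpow_mul (by positivity), Real.rpow_natCast, Real.rpow_natCast]
        ring
    _ ≤ s ^ j * (2 * m : ℝ) ^ j := mul_le_mul_of_nonneg_right hpoly (by positivity)

theorem generic_subword_length_lower_bound_general (m : ℕ) (hm : 2 ≤ m) {G : Type*} [Group G]
    (g : Fin m → G)
    (hθ : cogrowth g < 1) (ε : ℝ) (hε : 0 < ε) :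
    ExpGeneric {w : Word m | ∀ u v u' : Word m, w = u ++ v ++ u' →
      ε * (w.length : ℝ) ≤ (v.length : ℝ) →
      ((1 - cogrowth g) / cogrowth g - ε) * (v.length : ℝ) ≤ (wlen g (eval g v) : ℝ)} := by
  change ExpGeneric (longFactorsUndistorted g ε ((1 - cogrowth g) / cogrowth g - ε))
  set θ := cogrowth g
  set c := (1 - θ) / θ - ε with hc_def
  rcases le_or_gt c 0 with hc | hc
  · rw [longFactorsUndistorted_eq_univ g ε hc]
    exact expGeneric_univ
  have hθ0 : 0 < θ := by
    by_contra! h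
    have : (1 - θ) / θ ≤ 0 := div_nonpos_of_nonneg_of_nonpos (by linarith) h
    linarith
  have hθc : θ < 1 / (1 + c) := by
    rw [lt_div_iff₀ (by linarith), hc_def, mul_add, mul_sub, mul_div_cancel₀ _ hθ0.ne']
    nlinarith
  obtain ⟨θ', hθθ', hθ'c⟩ := exists_between hθc
  exact expNegligible_compl_longFactorsUndistorted (by omega) g hε hc.le (hθ0.trans hθθ').le
    ((lt_div_iff₀ (by linarith)).1 hθ'c) (eventually_ncard_V_le_of_cogrowth_lt (by omega) g hθθ')

/-- Lemma `quasi`(1): if `G` is non-amenable (`θ < 1`), then for every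
`ε > 0` the set of words `w` such that every contiguous subword `v` of `w` with
`|v| ≥ ε|w|` satisfies `|v̄| ≥ ((1-θ)/θ - ε)|v|` is exponentially generic. -/
theorem generic_subword_length_lower_bound (m : ℕ) (hm : 2 ≤ m) {G : Type*} [Group G]
    (g : Fin m → G) (hsurj : Function.Surjective (eval g))
    (hθ : cogrowth g < 1) (ε : ℝ) (hε : 0 < ε) :
    ExpGeneric {w : Word m | ∀ u v u' : Word m, w = u ++ v ++ u' →
      ε * (w.length : ℝ) ≤ (v.length : ℝ) →
      ((1 - cogrowth g) / cogrowth g - ε) * (v.length : ℝ) ≤ (wlen g (eval g v) : ℝ)} :=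
  generic_subword_length_lower_bound_general m hm g hθ ε hε

end GenericSubgroups
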